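/- arXiv:0801.0480 — 4 statements merged into one kernel-verified Lean document; each statement's English description precedes it below -/
import Mathlib

section
/- Let q be a real number with 0 < q < 1, let h ≥ 1 be an integer and let x ≥ 0 be a real number. Then for every real t, the series Σ_{m=0}^∞ (−1)^m q^{hm} exp([m+x]_q · t) converges absolutely, and for every n ≥ 0 the power series Σ_{n=0}^∞ E_n(x, h | q) t^n / n! converges to the same value; i.e. Σ_{n=0}^∞ E_n(x, h | q) t^n / n! = [2]_q Σ_{m=0}^∞ (−1)^m q^{hm} exp([m+x]_q · t). -/
open Finset

/-- The q-analogue `[x]_q = (1 - q^x)/(1 - q)` for real `x` (using the real power `q ^ x`). -/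
noncomputable def qNum (q x : ℝ) : ℝ := (1 - q ^ x) / (1 - q)

/-- The q-Euler polynomial
`E_n(x, h | q) = [2]_q (1-q)^{-n} Σ_{l=0}^{n} C(n,l) (-1)^l q^{lx} / (1 + q^{l+h})`. -/
noncomputable def qEuler (q : ℝ) (n h : ℕ) (x : ℝ) : ℝ :=
  (1 + q) * ((1 - q) ^ n)⁻¹ *
    ∑ l ∈ range (n + 1), (n.choose l : ℝ) * (-1) ^ l * q ^ ((l : ℝ) * x) / (1 + q ^ (l + h))

/-!
Expand `exp([m+x]_q t)` in powers of `t` and consider the double series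
`Σ_{m,n} (-1)^m q^{hm} ([m+x]_q t)^n / n!`. Since `0 ≤ [m+x]_q ≤ 1/(1-q)`, it is dominated by the
product of the geometric series of `q^h` and the exponential series of `|t|/(1-q)`, so it is
absolutely summable. Summing over `n` first gives the right-hand side. Summing over `m` first, the
binomial expansion of `(1 - q^x q^m)^n` turns each column into a finite combination of geometric
series of ratio `-q^{l+h}`, with sums `1/(1+q^{l+h})`; this gives `E_n(x,h|q) t^n / (n! [2]_q)`.
-/

theorem Real.hasSum_pow_div_factorial_exp (y : ℝ) :
    HasSum (fun n : ℕ => y ^ n / (n.factorial : ℝ)) (Real.exp y) := by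
  rw [Real.exp_eq_exp_ℝ]
  exact NormedSpace.expSeries_div_hasSum_exp y

theorem qNum_nonneg {q y : ℝ} (hq0 : 0 < q) (hq1 : q < 1) (hy : 0 ≤ y) : 0 ≤ qNum q y :=
  div_nonneg (sub_nonneg.mpr (Real.rpow_le_one hq0.le hq1.le hy)) (sub_pos.mpr hq1).le

theorem qNum_le_inv_one_sub {q : ℝ} (hq0 : 0 < q) (hq1 : q < 1) (y : ℝ) : qNum q y ≤ (1 - q)⁻¹ := by
  rw [qNum, div_eq_mul_inv]
  exact mul_le_of_le_one_left (inv_pos.mpr (sub_pos.mpr hq1)).le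
    (sub_le_self _ (Real.rpow_pos_of_pos hq0 y).le)

theorem neg_one_pow_mul_pow_mul_one_sub_mul_pow_eq_sum (q a : ℝ) (h m n : ℕ) :
    (-1) ^ m * q ^ (h * m) * (1 - a * q ^ m) ^ n =
      ∑ l ∈ range (n + 1), (n.choose l : ℝ) * (-a) ^ l * (-q ^ (l + h)) ^ m := by
  rw [sub_eq_neg_add, add_pow, mul_sum]
  refine sum_congr rfl fun l _ => ?_
  ring

theorem hasSum_neg_one_pow_mul_pow_mul_one_sub_mul_pow {q : ℝ} (hq : |q| < 1) {h : ℕ}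
    (hh : 1 ≤ h) (a : ℝ) (n : ℕ) :
    HasSum (fun m : ℕ => (-1) ^ m * q ^ (h * m) * (1 - a * q ^ m) ^ n)
      (∑ l ∈ range (n + 1), (n.choose l : ℝ) * (-a) ^ l / (1 + q ^ (l + h))) := by
  simp_rw [neg_one_pow_mul_pow_mul_one_sub_mul_pow_eq_sum]
  refine hasSum_sum fun l _ => ?_
  have hlt : |-q ^ (l + h)| < 1 := by
    rw [abs_neg, abs_pow]
    exact pow_lt_one₀ (abs_nonneg q) hq (by omega)
  simpa only [div_eq_mul_inv, sub_neg_eq_add] using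
    (hasSum_geometric_of_abs_lt_one hlt).mul_left ((n.choose l : ℝ) * (-a) ^ l)

noncomputable def qEulerDoubleTerm (q : ℝ) (h : ℕ) (x t : ℝ) (m n : ℕ) : ℝ :=
  (-1) ^ m * q ^ (h * m) * (qNum q ((m : ℝ) + x) * t) ^ n / (n.factorial : ℝ)

theorem abs_qEulerDoubleTerm_le {q : ℝ} (hq0 : 0 < q) (hq1 : q < 1) (h : ℕ) {x : ℝ}
    (hx : 0 ≤ x) (t : ℝ) (m n : ℕ) :
    |qEulerDoubleTerm q h x t m n| ≤ (q ^ h) ^ m * (((1 - q)⁻¹ * |t|) ^ n / (n.factorial : ℝ)) := by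
  have hqNum : |qNum q ((m : ℝ) + x) * t| ≤ (1 - q)⁻¹ * |t| := by
    rw [abs_mul, abs_of_nonneg (qNum_nonneg hq0 hq1 (by positivity))]
    exact mul_le_mul_of_nonneg_right (qNum_le_inv_one_sub hq0 hq1 _) (abs_nonneg t)
  rw [qEulerDoubleTerm, abs_div, abs_mul, abs_mul, abs_pow, abs_neg, abs_one, one_pow, one_mul,
    abs_pow, abs_pow, abs_of_pos hq0, Nat.abs_cast, pow_mul, mul_div_assoc]
  gcongr

theorem summable_qEulerDoubleTerm {q : ℝ} (hq0 : 0 < q) (hq1 : q < 1) {h : ℕ} (hh : 1 ≤ h)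
    {x : ℝ} (hx : 0 ≤ x) (t : ℝ) :
    Summable (Function.uncurry (qEulerDoubleTerm q h x t)) := by
  have hgeom : Summable fun m : ℕ => (q ^ h) ^ m :=
    summable_geometric_of_lt_one (by positivity) (pow_lt_one₀ hq0.le hq1 (by omega))
  have hexp := Real.summable_pow_div_factorial ((1 - q)⁻¹ * |t|)
  refine Summable.of_norm_bounded (hgeom.mul_of_nonneg hexp (fun _ => by positivity)
    (fun _ => by positivity)) fun p => ?_
  exact abs_qEulerDoubleTerm_le hq0 hq1 h hx t p.1 p.2

theorem hasSum_qEulerDoubleTerm_exp (q : ℝ) (h : ℕ) (x t : ℝ) (m : ℕ) :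
    HasSum (qEulerDoubleTerm q h x t m)
      ((-1) ^ m * q ^ (h * m) * Real.exp (qNum q ((m : ℝ) + x) * t)) := by
  refine ((Real.hasSum_pow_div_factorial_exp _).mul_left ((-1) ^ m * q ^ (h * m))).congr_fun
    fun n => ?_
  rw [qEulerDoubleTerm, mul_div_assoc]

theorem hasSum_qEulerDoubleTerm_qEuler {q : ℝ} (hq0 : 0 < q) (hq1 : q < 1) {h : ℕ} (hh : 1 ≤ h)
    (x t : ℝ) (n : ℕ) :
    HasSum (fun m => (1 + q) * qEulerDoubleTerm q h x t m n)
      (qEuler q n h x * t ^ n / (n.factorial : ℝ)) := by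
  have hpow (m : ℕ) : q ^ ((m : ℝ) + x) = q ^ x * q ^ m := by
    rw [Real.rpow_add hq0, Real.rpow_natCast, mul_comm]
  have hpow' (l : ℕ) : q ^ ((l : ℝ) * x) = (q ^ x) ^ l := by
    rw [mul_comm, Real.rpow_mul_natCast hq0.le]
  have hsum : qEuler q n h x * t ^ n / (n.factorial : ℝ) =
      (1 + q) * ((1 - q) ^ n)⁻¹ * t ^ n / (n.factorial : ℝ) *
        ∑ l ∈ range (n + 1), (n.choose l : ℝ) * (-q ^ x) ^ l / (1 + q ^ (l + h)) := by
    simp only [qEuler, mul_sum, sum_mul, sum_div, hpow']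
    refine sum_congr rfl fun l _ => ?_
    ring
  rw [hsum]
  refine ((hasSum_neg_one_pow_mul_pow_mul_one_sub_mul_pow (abs_lt.mpr ⟨by linarith, hq1⟩) hh
    (q ^ x) n).mul_left _).congr_fun fun m => ?_
  rw [qEulerDoubleTerm, qNum, hpow, div_mul_eq_mul_div, div_pow, mul_pow]
  ring

/-- the generating function identity
`Σ_n E_n(x,h|q) tⁿ/n! = [2]_q Σ_m (-1)^m q^{hm} exp([m+x]_q t)`,
with the right-hand series converging absolutely. -/
theorem qEuler_generating_function (q : ℝ) (hq0 : 0 < q) (hq1 : q < 1)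
    (h : ℕ) (hh : 1 ≤ h) (x : ℝ) (hx : 0 ≤ x) (t : ℝ) :
    Summable (fun m : ℕ => |(-1 : ℝ) ^ m * q ^ (h * m) * Real.exp (qNum q ((m : ℝ) + x) * t)|) ∧
    HasSum (fun n : ℕ => qEuler q n h x * t ^ n / (n.factorial : ℝ))
      ((1 + q) * ∑' m : ℕ, (-1 : ℝ) ^ m * q ^ (h * m) * Real.exp (qNum q ((m : ℝ) + x) * t)) := by
  have hq : 1 + q ≠ 0 := by positivity
  have hF := (summable_qEulerDoubleTerm hq0 hq1 hh hx t).hasSum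
  have hrows := hF.prod_fiberwise (hasSum_qEulerDoubleTerm_exp q h x t)
  have hcols := ((Equiv.prodComm ℕ ℕ).hasSum_iff.mpr hF).prod_fiberwise fun n =>
    ((hasSum_qEulerDoubleTerm_qEuler hq0 hq1 hh x t n).div_const (1 + q)).congr_fun fun m =>
      (mul_div_cancel_left₀ _ hq).symm
  refine ⟨summable_abs_iff.mpr hrows.summable, ?_⟩
  rw [hrows.tsum_eq]
  exact (hcols.mul_left (1 + q)).congr_fun fun n => (mul_div_cancel₀ _ hq).symm
end

section
/- Let q be a real number with 0 < q < 1, let h ≥ 1 be an integer, let n ≥ 0 be an integer and let x ≥ 0 be a real number. Then the series Σ_{m=0}^∞ (−1)^m q^{hm} [m+x]_q^n converges absolutely and [2]_q Σ_{m=0}^∞ (−1)^m q^{hm} [m+x]_q^n = E_n(x, h | q), i.e. it equals [2]_q (1 − q)^{−n} Σ_{l=0}^{n} C(n,l) (−1)^l q^{lx} / (1 + q^{l+h}). -/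
open Finset

/-! Binomially expanding `[m+x]_q^n = (1 - q^m q^x)^n / (1-q)^n` writes the `m`-th term as a finite
combination of the geometric terms `(-q^(l+h))^m`, `0 ≤ l ≤ n`, whose ratios have modulus `< 1`
because `h ≥ 1`; summing these geometric series termwise gives `E_n(x, h | q)`. -/

theorem hasSum_sum_mul_geometric {𝕜 ι : Type*} [NormedField 𝕜] [CompleteSpace 𝕜]
    (s : Finset ι) (c r : ι → 𝕜) (hr : ∀ i ∈ s, ‖r i‖ < 1) :
    HasSum (fun m : ℕ => ∑ i ∈ s, c i * r i ^ m) (∑ i ∈ s, c i * (1 - r i)⁻¹) :=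
  hasSum_sum fun i hi => (hasSum_geometric_of_norm_lt_one (hr i hi)).mul_left (c i)

theorem one_sub_rpow_natCast_add_pow {q : ℝ} (hq : 0 < q) (m n : ℕ) (x : ℝ) :
    (1 - q ^ ((m : ℝ) + x)) ^ n
      = ∑ l ∈ range (n + 1), (n.choose l : ℝ) * (-1) ^ l * q ^ ((l : ℝ) * x) * (q ^ l) ^ m := by
  rw [sub_eq_neg_add, add_pow]
  refine sum_congr rfl fun l _ => ?_
  have hpow : (q ^ ((m : ℝ) + x)) ^ l = q ^ ((l : ℝ) * x) * (q ^ l) ^ m := by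
    rw [← Real.rpow_natCast, ← Real.rpow_mul hq.le, mul_comm, mul_add, Real.rpow_add hq,
      ← pow_mul, ← Nat.cast_mul, Real.rpow_natCast, mul_comm l m, mul_comm]
  rw [neg_pow, hpow]
  ring

theorem neg_one_pow_mul_pow_mul_qNum_pow {q : ℝ} (hq : 0 < q) (h m n : ℕ) (x : ℝ) :
    (-1 : ℝ) ^ m * q ^ (h * m) * qNum q ((m : ℝ) + x) ^ n
      = ∑ l ∈ range (n + 1),
          (n.choose l : ℝ) * (-1) ^ l * q ^ ((l : ℝ) * x) / (1 - q) ^ n * (-q ^ (l + h)) ^ m := by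
  rw [qNum, div_pow, one_sub_rpow_natCast_add_pow hq, sum_div, mul_sum]
  refine sum_congr rfl fun l _ => ?_
  rw [neg_pow (q ^ (l + h)), pow_add, mul_pow, pow_mul q h m]
  ring

theorem qEuler_eq_series_general (q : ℝ) (hq0 : 0 < q) (hq1 : q < 1)
    (h : ℕ) (hh : 1 ≤ h) (n : ℕ) (x : ℝ) :
    Summable (fun m : ℕ => |(-1 : ℝ) ^ m * q ^ (h * m) * (qNum q ((m : ℝ) + x)) ^ n|) ∧
    (1 + q) * ∑' m : ℕ, (-1 : ℝ) ^ m * q ^ (h * m) * (qNum q ((m : ℝ) + x)) ^ n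
      = qEuler q n h x := by
  have hratio : ∀ l ∈ range (n + 1), ‖-q ^ (l + h)‖ < 1 := fun l _ => by
    rw [norm_neg, Real.norm_of_nonneg (by positivity)]
    exact pow_lt_one₀ hq0.le hq1 (by omega)
  have hsum := hasSum_sum_mul_geometric _
    (fun l => (n.choose l : ℝ) * (-1) ^ l * q ^ ((l : ℝ) * x) / (1 - q) ^ n) _ hratio
  simp only [← neg_one_pow_mul_pow_mul_qNum_pow hq0, sub_neg_eq_add] at hsum
  refine ⟨hsum.summable.abs, ?_⟩
  rw [hsum.tsum_eq, qEuler, mul_assoc, mul_sum (range (n + 1)) _ ((1 - q) ^ n)⁻¹]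
  exact congrArg _ (sum_congr rfl fun l _ => by ring)

/-- `[2]_q Σ_{m=0}^∞ (-1)^m q^{hm} [m+x]_qⁿ = E_n(x, h | q)`,
with the series converging absolutely. -/
theorem qEuler_eq_series (q : ℝ) (hq0 : 0 < q) (hq1 : q < 1)
    (h : ℕ) (hh : 1 ≤ h) (n : ℕ) (x : ℝ) (hx : 0 ≤ x) :
    Summable (fun m : ℕ => |(-1 : ℝ) ^ m * q ^ (h * m) * (qNum q ((m : ℝ) + x)) ^ n|) ∧
    (1 + q) * ∑' m : ℕ, (-1 : ℝ) ^ m * q ^ (h * m) * (qNum q ((m : ℝ) + x)) ^ n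
      = qEuler q n h x :=
  qEuler_eq_series_general q hq0 hq1 h hh n x
end

section
/- Let q be a real number with 0 < q < 1, let n ≥ 0 be an integer and let k ≥ 1 be an odd positive integer. Then E_{n,q}(k) + E_{n,q} = [2]_q Σ_{l=0}^{k−1} (−1)^l [l]_q^n. -/
open Finset

/-!
For odd `k` and `x ≠ -1`, `Σ_{l<k} (-x)^l = (1 + x^k)/(1 + x)`. Applied with `x = q^j`, the
`j`-th term of `E_{n,q}(k) + E_{n,q}` becomes an alternating geometric sum over `l < k`;
exchanging the two sums and resumming over `j` by the binomial theorem produces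
`Σ_{l<k} (-1)^l (1 - q^l)^n`.
-/

lemma Odd.one_add_mul_geom_sum_neg {R : Type*} [CommRing R] {k : ℕ} (hk : Odd k) (x : R) :
    (1 + x) * ∑ l ∈ range k, (-x) ^ l = 1 + x ^ k := by
  simpa [hk.neg_pow] using mul_neg_geom_sum (-x) k

lemma Odd.geom_sum_neg_eq_div {K : Type*} [Field K] {k : ℕ} (hk : Odd k) {x : K}
    (hx : 1 + x ≠ 0) :
    ∑ l ∈ range k, (-x) ^ l = (1 + x ^ k) / (1 + x) := by
  rw [eq_div_iff hx, mul_comm, hk.one_add_mul_geom_sum_neg]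

lemma one_sub_pow_eq_sum_choose {R : Type*} [CommRing R] (y : R) (n : ℕ) :
    (1 - y) ^ n = ∑ j ∈ range (n + 1), (n.choose j : R) * (-1) ^ j * y ^ j := by
  rw [sub_eq_add_neg, add_comm, add_pow]
  refine sum_congr rfl fun j _ => ?_
  rw [neg_pow, one_pow]
  ring

lemma sum_neg_one_pow_mul_one_sub_pow_eq {R : Type*} [CommRing R] (x : R) (n k : ℕ) :
    ∑ l ∈ range k, (-1) ^ l * (1 - x ^ l) ^ n
      = ∑ j ∈ range (n + 1), (n.choose j : R) * (-1) ^ j * ∑ l ∈ range k, (-x ^ j) ^ l := by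
  simp_rw [one_sub_pow_eq_sum_choose, mul_sum]
  rw [sum_comm]
  refine sum_congr rfl fun j _ => sum_congr rfl fun l _ => ?_
  rw [neg_pow (x ^ j), pow_right_comm]
  ring

lemma qEuler_natCast (q : ℝ) (n h m : ℕ) :
    qEuler q n h m = (1 + q) * ((1 - q) ^ n)⁻¹ *
      ∑ l ∈ range (n + 1), (n.choose l : ℝ) * (-1) ^ l * (q ^ l) ^ m / (1 + q ^ (l + h)) := by
  simp only [qEuler, ← Nat.cast_mul, Real.rpow_natCast, pow_mul]

lemma qNum_natCast_pow (q : ℝ) (l n : ℕ) :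
    qNum q l ^ n = ((1 - q) ^ n)⁻¹ * (1 - q ^ l) ^ n := by
  rw [qNum, Real.rpow_natCast, div_pow, div_eq_inv_mul]

theorem qEuler_odd_sum_general (q : ℝ) (hq0 : 0 < q)
    (n k : ℕ) (hko : Odd k) :
    qEuler q n 0 (k : ℝ) + qEuler q n 0 0
      = (1 + q) * ∑ l ∈ range k, (-1 : ℝ) ^ l * (qNum q (l : ℝ)) ^ n := by
  have hE0 := qEuler_natCast q n 0 0
  rw [Nat.cast_zero] at hE0
  calc qEuler q n 0 k + qEuler q n 0 0
      = (1 + q) * (((1 - q) ^ n)⁻¹ * ∑ j ∈ range (n + 1),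
          (n.choose j : ℝ) * (-1) ^ j * ((1 + (q ^ j) ^ k) / (1 + q ^ j))) := by
        rw [qEuler_natCast, hE0, ← mul_add, ← sum_add_distrib, mul_assoc]
        congr 2
        refine sum_congr rfl fun j _ => ?_
        ring
    _ = (1 + q) * (((1 - q) ^ n)⁻¹ * ∑ l ∈ range k, (-1) ^ l * (1 - q ^ l) ^ n) := by
        simp_rw [sum_neg_one_pow_mul_one_sub_pow_eq,
          hko.geom_sum_neg_eq_div (by positivity : (1 : ℝ) + q ^ _ ≠ 0)]
    _ = (1 + q) * ∑ l ∈ range k, (-1 : ℝ) ^ l * (qNum q (l : ℝ)) ^ n := by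
        simp_rw [qNum_natCast_pow, mul_left_comm ((-1 : ℝ) ^ _), ← mul_sum]

/-- for odd `k ≥ 1`,
`E_{n,q}(k) + E_{n,q} = [2]_q Σ_{l=0}^{k-1} (-1)^l [l]_qⁿ`. -/
theorem qEuler_odd_sum (q : ℝ) (hq0 : 0 < q) (hq1 : q < 1)
    (n k : ℕ) (hk : 1 ≤ k) (hko : Odd k) :
    qEuler q n 0 (k : ℝ) + qEuler q n 0 0
      = (1 + q) * ∑ l ∈ range k, (-1 : ℝ) ^ l * (qNum q (l : ℝ)) ^ n :=
  qEuler_odd_sum_general q hq0 n k hko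
end

section
/- Let q be a real number with 0 < q < 1, let n ≥ 0 and h ≥ 0 be integers, and let x be a real number. Then E_n(x, h | q) = Σ_{l=0}^{n} C(n,l) q^{xl} E_l(h | q) [x]_q^{n−l}, where E_l(h | q) = E_l(0, h | q). -/
/-!
With `t = q^x` both sides carry the factor `[2]_q (1-q)^{-n}`, and `[x]_q^{n-l}` supplies the
missing powers of `1 - q` as `(1 - t)^{n-l}`. The remaining identity is purely binomial:
`E_l(h|q)` is, up to that factor, the binomial transform of `b_j = (-1)^j / (1 + q^{j+h})`, and
averaging a binomial transform against the Bernstein weights `C(n,l) t^l (1-t)^{n-l}` returns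
`∑_j C(n,j) t^j b_j`, which is `E_n(x, h|q)` up to the same factor.
-/

open Finset

section BinomialTransform

variable {R : Type*} [CommRing R]

theorem sum_Ico_choose_mul_choose_mul_pow_mul_one_sub_pow {n j : ℕ} (hj : j ≤ n) (t : R) :
    ∑ l ∈ Ico j (n + 1), (n.choose l : R) * l.choose j * t ^ l * (1 - t) ^ (n - l)
      = n.choose j * t ^ j := by
  obtain ⟨k, rfl⟩ := Nat.exists_eq_add_of_le hj
  have hterm : ∀ m ∈ range (k + 1),
      ((j + k).choose (j + m) : R) * (j + m).choose j * t ^ (j + m) * (1 - t) ^ (j + k - (j + m))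
        = (j + k).choose j * t ^ j * (t ^ m * (1 - t) ^ (k - m) * k.choose m) := by
    intro m _
    have hchoose := Nat.choose_mul (n := j + k) (k := j + m) (s := j) (Nat.le_add_right j m)
    rw [Nat.add_sub_cancel_left, Nat.add_sub_cancel_left] at hchoose
    rw [Nat.add_sub_add_left, pow_add, ← Nat.cast_mul, hchoose]
    push_cast
    ring
  rw [sum_Ico_eq_sum_range, show j + k + 1 - j = k + 1 by omega, sum_congr rfl hterm,
    ← mul_sum, ← add_pow, add_sub_cancel, one_pow, mul_one]

theorem sum_choose_mul_pow_mul_sum_choose (a : ℕ → R) (n : ℕ) (t : R) :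
    ∑ l ∈ range (n + 1),
        (n.choose l : R) * t ^ l * (1 - t) ^ (n - l) *
          ∑ j ∈ range (l + 1), (l.choose j : R) * a j
      = ∑ j ∈ range (n + 1), (n.choose j : R) * t ^ j * a j := by
  simp_rw [mul_sum, ← Nat.Ico_zero_eq_range]
  rw [← sum_Ico_Ico_comm 0 (n + 1) fun j l =>
    (n.choose l : R) * t ^ l * (1 - t) ^ (n - l) * (l.choose j * a j)]
  refine sum_congr rfl fun j hj => ?_
  rw [← sum_Ico_choose_mul_choose_mul_pow_mul_one_sub_pow (by grind) t, sum_mul]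
  exact sum_congr rfl fun l _ => by ring

end BinomialTransform

theorem qEuler_eq_sum_pow {q : ℝ} (hq : 0 ≤ q) (n h : ℕ) (x : ℝ) :
    qEuler q n h x = (1 + q) * ((1 - q) ^ n)⁻¹ *
      ∑ l ∈ range (n + 1),
        (n.choose l : ℝ) * (q ^ x) ^ l * ((-1) ^ l / (1 + q ^ (l + h))) := by
  unfold qEuler
  congr 1
  refine sum_congr rfl fun l _ => ?_
  rw [mul_comm (l : ℝ), Real.rpow_mul hq, Real.rpow_natCast]
  ring

theorem qEuler_zero_eq_sum {q : ℝ} (hq : 0 ≤ q) (n h : ℕ) :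
    qEuler q n h 0 = (1 + q) * ((1 - q) ^ n)⁻¹ *
      ∑ l ∈ range (n + 1), (n.choose l : ℝ) * ((-1) ^ l / (1 + q ^ (l + h))) := by
  simp only [qEuler_eq_sum_pow hq, Real.rpow_zero, one_pow, mul_one]

/-- `E_n(x, h|q) = Σ_{l=0}^{n} C(n,l) q^{xl} E_l(h|q) [x]_q^{n-l}`. -/
theorem qEuler_poly_expansion_h (q : ℝ) (hq0 : 0 < q) (hq1 : q < 1)
    (n h : ℕ) (x : ℝ) :
    qEuler q n h x
      = ∑ l ∈ range (n + 1),
          (n.choose l : ℝ) * q ^ (x * (l : ℝ)) * qEuler q l h 0 * (qNum q x) ^ (n - l) := by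
  set b : ℕ → ℝ := fun j => (-1) ^ j / (1 + q ^ (j + h))
  set t := q ^ x with ht
  have hterm : ∀ l ∈ range (n + 1),
      (n.choose l : ℝ) * q ^ (x * l) * qEuler q l h 0 * qNum q x ^ (n - l)
        = (1 + q) * ((1 - q) ^ n)⁻¹ *
          ((n.choose l : ℝ) * t ^ l * (1 - t) ^ (n - l) *
            ∑ j ∈ range (l + 1), (l.choose j : ℝ) * b j) := by
    intro l hl
    have hsplit : (1 - q) ^ n = (1 - q) ^ l * (1 - q) ^ (n - l) := by
      rw [← pow_add, Nat.add_sub_cancel' (by grind)]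
    have hq1_ne : 1 - q ≠ 0 := by linarith
    rw [qEuler_zero_eq_sum hq0.le, qNum, Real.rpow_mul hq0.le, Real.rpow_natCast,
      ← ht, hsplit, div_pow]
    field_simp
    simp only [b, mul_div_assoc]
    ring
  rw [qEuler_eq_sum_pow hq0.le, sum_congr rfl hterm, ← mul_sum,
    sum_choose_mul_pow_mul_sum_choose]
end
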